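/- arXiv:2212.05658 — 12 statements merged into one kernel-verified Lean document; each statement's English description precedes it below -/
import Mathlib

section
/- For vectors $s, y \in \mathbb{R}^n$ with $s^T y > 0$ and a parameter $\gamma > 0$, define $\alpha(\gamma) = \frac{\|s\|^2 - \|y\|^2/\gamma^2 + \sqrt{(\|s\|^2 - \|y\|^2/\gamma^2)^2 + 4(s^Ty)^2/\gamma^2}}{2 s^T y}$. Then $\alpha(\gamma)$ is the unique global minimizer over $\alpha \in \mathbb{R}$ of the function $\alpha \mapsto \frac{\|\alpha y - s\|^2}{1/\gamma^2 + \alpha^2}$. -/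
/-!
Writing `S = ‖s‖²`, `Y = ‖y‖²`, `c = sᵀy` and `d = 1/γ²`, the objective is the ratio
`(Yα² - 2cα + S) / (d + α²)`. Let `m` be the smaller root of `(S - m d)(Y - m) = c²`; then
`m < Y`, and the numerator splits as `m (d + α²) + (Y - m)(α - α(γ))²`. Hence the objective equals
`m + (Y - m)(α - α(γ))² / (d + α²)`, which is minimal exactly at `α = α(γ)`.
-/

open Finset

lemma sum_mul_sub_sq {ι : Type*} (t : Finset ι) (s y : ι → ℝ) (α : ℝ) :
    ∑ i ∈ t, (α * y i - s i) ^ 2 =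
      α ^ 2 * ∑ i ∈ t, y i ^ 2 - 2 * (∑ i ∈ t, s i * y i) * α + ∑ i ∈ t, s i ^ 2 := by
  simp only [sub_sq, sum_add_distrib, sum_sub_distrib, mul_sum, sum_mul]
  congr 2 <;> exact sum_congr rfl fun i _ => by ring

lemma unique_minimizer_of_eq_add_mul_sq_div {m k d a : ℝ} (hk : 0 < k) (hd : 0 < d) (f : ℝ → ℝ)
    (hf : ∀ α, f α = m + k * (α - a) ^ 2 / (d + α ^ 2)) :
    (∀ α, f a ≤ f α) ∧ (∀ α, f α = f a → α = a) := by
  have hfa : f a = m := by simp [hf]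
  have hden : ∀ α, 0 < d + α ^ 2 := fun α => by positivity
  refine ⟨fun α => ?_, fun α hα => ?_⟩
  · rw [hfa, hf]
    have := div_nonneg (mul_nonneg hk.le (sq_nonneg (α - a))) (hden α).le
    linarith
  · rw [hfa, hf, add_eq_left, div_eq_zero_iff, mul_eq_zero, pow_eq_zero_iff two_ne_zero,
      sub_eq_zero] at hα
    rcases hα with (hk0 | h) | hden0
    · exact absurd hk0 hk.ne'
    · exact h
    · exact absurd hden0 (hden α).ne'

lemma quadratic_div_eq_add_mul_sq_div {S Y c d m a : ℝ} (hd : 0 < d)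
    (h₁ : (Y - m) * a = c) (h₂ : m * d + c * a = S) (α : ℝ) :
    (α ^ 2 * Y - 2 * c * α + S) / (d + α ^ 2) = m + (Y - m) * (α - a) ^ 2 / (d + α ^ 2) := by
  have hden : d + α ^ 2 ≠ 0 := by positivity
  rw [div_eq_iff hden, add_mul, div_mul_cancel₀ _ hden]
  linear_combination (2 * α - a) * h₁ - h₂

lemma exists_quadratic_ratio_min {S Y c d a : ℝ} (hc : 0 < c) (hd : 0 < d)
    (ha : a = (S - Y * d + √((S - Y * d) ^ 2 + 4 * c ^ 2 * d)) / (2 * c)) :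
    ∃ m, m < Y ∧ (Y - m) * a = c ∧ m * d + c * a = S := by
  set A := S - Y * d
  set R := √(A ^ 2 + 4 * c ^ 2 * d)
  have hR : R ^ 2 = A ^ 2 + 4 * c ^ 2 * d := Real.sq_sqrt (by positivity)
  have hAR : A < R := by
    nlinarith [Real.sqrt_nonneg (A ^ 2 + 4 * c ^ 2 * d), mul_pos (mul_pos hc hc) hd]
  have hYm : Y - (S + Y * d - R) / (2 * d) = (R - A) / (2 * d) := by
    field_simp; ring
  refine ⟨(S + Y * d - R) / (2 * d), ?_, ?_, ?_⟩
  · have : 0 < (R - A) / (2 * d) := div_pos (by linarith) (by positivity)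
    linarith
  · rw [hYm, ha]
    field_simp
    linear_combination hR
  · rw [ha]
    field_simp
    ring

theorem stmt_0 (n : ℕ) (s y : Fin n → ℝ) (hsy : 0 < ∑ i, s i * y i)
    (γ : ℝ) (hγ : 0 < γ) :
    let c : ℝ := ∑ i, s i * y i
    let αγ : ℝ := ((∑ i, s i ^ 2) - (∑ i, y i ^ 2) / γ ^ 2 +
      Real.sqrt (((∑ i, s i ^ 2) - (∑ i, y i ^ 2) / γ ^ 2) ^ 2 + 4 * c ^ 2 / γ ^ 2)) / (2 * c)
    let f : ℝ → ℝ := fun α => (∑ i, (α * y i - s i) ^ 2) / (1 / γ ^ 2 + α ^ 2)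
    (∀ α : ℝ, f αγ ≤ f α) ∧ (∀ α : ℝ, f α = f αγ → α = αγ) := by
  intro c αγ f
  have hd : (0 : ℝ) < 1 / γ ^ 2 := by positivity
  have ha : αγ = ((∑ i, s i ^ 2) - (∑ i, y i ^ 2) * (1 / γ ^ 2) +
      √(((∑ i, s i ^ 2) - (∑ i, y i ^ 2) * (1 / γ ^ 2)) ^ 2 + 4 * c ^ 2 * (1 / γ ^ 2))) / (2 * c) := by
    simp only [αγ, mul_one_div]
  obtain ⟨m, hmY, h₁, h₂⟩ := exists_quadratic_ratio_min hsy hd ha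
  refine unique_minimizer_of_eq_add_mul_sq_div (m := m) (sub_pos.mpr hmY) hd f fun α => ?_
  rw [← quadratic_div_eq_add_mul_sq_div hd h₁ h₂ α]
  simp only [f, sum_mul_sub_sq]
end

section
/- Let $s, y \in \mathbb{R}^n$ with $s^T y > 0$ and $\gamma > 0$. Define $\alpha^{BB}(\gamma) = \frac{\|s\|^2 - \|y\|^2/\gamma^2 + \sqrt{(\|s\|^2 - \|y\|^2/\gamma^2)^2 + 4(s^Ty)^2/\gamma^2}}{2 s^T y}$, $\alpha^{BB1} = \frac{\|s\|^2}{s^Ty}$, and $\alpha^{BB2} = \frac{s^Ty}{\|y\|^2}$. Then $\alpha^{BB2} \le \alpha^{BB}(\gamma) \le \alpha^{BB1}$ for every $\gamma > 0$. -/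
theorem stmt_1 (n : ℕ) (s y : Fin n → ℝ) (hsy : 0 < ∑ i, s i * y i)
    (γ : ℝ) (hγ : 0 < γ) :
    let c : ℝ := ∑ i, s i * y i
    let αγ : ℝ := ((∑ i, s i ^ 2) - (∑ i, y i ^ 2) / γ ^ 2 +
      Real.sqrt (((∑ i, s i ^ 2) - (∑ i, y i ^ 2) / γ ^ 2) ^ 2 + 4 * c ^ 2 / γ ^ 2)) / (2 * c)
    c / (∑ i, y i ^ 2) ≤ αγ ∧ αγ ≤ (∑ i, s i ^ 2) / c := by
  intro c αγ
  set S : ℝ := ∑ i, s i ^ 2 with hS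
  set Y : ℝ := ∑ i, y i ^ 2 with hY
  have hc : 0 < c := hsy
  have hCS : c ^ 2 ≤ S * Y := Finset.sum_mul_sq_le_sq_mul_sq Finset.univ s y
  have hS0 : 0 ≤ S := Finset.sum_nonneg fun i _ => sq_nonneg _
  have hY0 : 0 ≤ Y := Finset.sum_nonneg fun i _ => sq_nonneg _
  have hSY : 0 < S * Y := lt_of_lt_of_le (by positivity) hCS
  have hSpos : 0 < S := by nlinarith
  have hYpos : 0 < Y := by nlinarith
  have hγ2 : (0:ℝ) < γ ^ 2 := by positivity
  set A : ℝ := S - Y / γ ^ 2 with hA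
  set D : ℝ := A ^ 2 + 4 * c ^ 2 / γ ^ 2 with hD
  have hD0 : (0:ℝ) ≤ D := by positivity
  have hsq : Real.sqrt D ^ 2 = D := Real.sq_sqrt hD0
  have hsqnn : 0 ≤ Real.sqrt D := Real.sqrt_nonneg _
  constructor
  · -- lower bound
    have key : 2 * c ^ 2 / Y - A ≤ Real.sqrt D := by
      rcases le_or_gt (2 * c ^ 2 / Y - A) 0 with h | h
      · linarith
      · rw [show (2 * c ^ 2 / Y - A ≤ Real.sqrt D) ↔ _ from Real.le_sqrt h.le hD0]
        have hdiff : D - (2 * c ^ 2 / Y - A) ^ 2 = 4 * c ^ 2 / Y ^ 2 * (S * Y - c ^ 2) := by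
          rw [hD, hA]; field_simp; ring
        nlinarith [mul_nonneg (by positivity : (0:ℝ) ≤ 4 * c ^ 2 / Y ^ 2) (by linarith : (0:ℝ) ≤ S * Y - c ^ 2)]
    show c / Y ≤ (A + Real.sqrt D) / (2 * c)
    rw [div_le_div_iff₀ hYpos (by positivity)]
    have key2 : 2 * c ^ 2 - A * Y ≤ Real.sqrt D * Y := by
      have h3 := mul_le_mul_of_nonneg_right key hY0
      have h4 : (2 * c ^ 2 / Y - A) * Y = 2 * c ^ 2 - A * Y := by field_simp
      linarith [h4 ▸ h3]
    linarith [key2]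
  · -- upper bound
    have hv : (0:ℝ) ≤ S + Y / γ ^ 2 := by positivity
    have key : Real.sqrt D ≤ S + Y / γ ^ 2 := by
      have hdd : D ≤ (S + Y / γ ^ 2) ^ 2 := by
        have : (S + Y / γ ^ 2) ^ 2 - D = 4 / γ ^ 2 * (S * Y - c ^ 2) := by
          rw [hD, hA]; field_simp; ring
        nlinarith [mul_nonneg (by positivity : (0:ℝ) ≤ 4 / γ ^ 2) (by linarith : (0:ℝ) ≤ S * Y - c ^ 2)]
      calc Real.sqrt D ≤ Real.sqrt ((S + Y / γ ^ 2) ^ 2) := Real.sqrt_le_sqrt hdd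
        _ = S + Y / γ ^ 2 := Real.sqrt_sq hv
    show (A + Real.sqrt D) / (2 * c) ≤ S / c
    rw [div_le_div_iff₀ (by positivity) hc]
    have h5 : A + Real.sqrt D ≤ 2 * S := by rw [hA]; linarith
    have h6 := mul_le_mul_of_nonneg_right h5 hc.le
    linarith [h6]
end

section
/- Let $s, y \in \mathbb{R}^n$ with $s^T y > 0$. The function $\gamma \mapsto \alpha^{BB}(\gamma) = \frac{\|s\|^2 - \|y\|^2/\gamma^2 + \sqrt{(\|s\|^2 - \|y\|^2/\gamma^2)^2 + 4(s^Ty)^2/\gamma^2}}{2 s^T y}$ is monotonically nondecreasing on $(0, \infty)$. -/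
/-!
Writing `p = 1 / γ²`, `a = ‖s‖²`, `b = ‖y‖²` and `c = sᵀy`, the numerator of `α^{BB}(γ)` is twice
the positive root `x(p)` of `x² = (a - b p) x + c² p`, so it suffices that `x(p)` is nonincreasing in
`p`. For `p ≤ q` the root `x = x(p)` satisfies `x² - (a - b q) x - c² q = (q - p) (b x - c²)`, and
`b x ≥ c²` by Cauchy–Schwarz: otherwise `x² - a x = p (c² - b x) > 0` forces `x > a`, whence
`b x ≥ a b ≥ c²`. Thus `x(p)` lies to the right of the positive root of the quadratic for `q`.
-/

open Set

/-- The larger root of `x² = u x + v`. -/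
noncomputable def posRoot (u v : ℝ) : ℝ := (u + √(u ^ 2 + 4 * v)) / 2

lemma posRoot_sq {u v : ℝ} (hv : 0 ≤ v) : posRoot u v ^ 2 = u * posRoot u v + v := by
  have hD : 0 ≤ u ^ 2 + 4 * v := by positivity
  have := Real.sq_sqrt hD
  unfold posRoot
  linear_combination this / 4

lemma posRoot_pos {u v : ℝ} (hv : 0 < v) : 0 < posRoot u v := by
  have : |u| < √(u ^ 2 + 4 * v) := by
    rw [← Real.sqrt_sq_eq_abs]
    exact Real.sqrt_lt_sqrt (sq_nonneg u) (by linarith)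
  unfold posRoot
  linarith [neg_abs_le u]

lemma posRoot_le_of_le_sq {u v x : ℝ} (hv : 0 ≤ v) (hx : 0 < x) (h : u * x + v ≤ x ^ 2) :
    posRoot u v ≤ x := by
  have hux : u ≤ x := le_of_mul_le_mul_right (by nlinarith) hx
  have hsqrt : √(u ^ 2 + 4 * v) ≤ 2 * x - u :=
    Real.sqrt_le_iff.2 ⟨by linarith, by nlinarith⟩
  unfold posRoot
  linarith

lemma sq_le_mul_of_root {a b c p x : ℝ} (hb : 0 ≤ b) (habc : c ^ 2 ≤ a * b) (hp : 0 < p)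
    (hx : 0 < x) (hroot : x ^ 2 = (a - b * p) * x + c ^ 2 * p) : c ^ 2 ≤ b * x := by
  by_contra! hlt
  have hax : a < x := by
    have : a * x < x * x := by nlinarith
    exact lt_of_mul_lt_mul_right this hx.le
  nlinarith

lemma antitoneOn_posRoot {a b c : ℝ} (hb : 0 ≤ b) (hc : c ≠ 0) (habc : c ^ 2 ≤ a * b) :
    AntitoneOn (fun p => posRoot (a - b * p) (c ^ 2 * p)) (Ioi 0) := by
  intro p (hp : 0 < p) q (hq : 0 < q) hpq
  have hv : 0 < c ^ 2 * p := by positivity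
  set x := posRoot (a - b * p) (c ^ 2 * p)
  have hx : 0 < x := posRoot_pos hv
  have hroot : x ^ 2 = (a - b * p) * x + c ^ 2 * p := posRoot_sq hv.le
  have hkey : c ^ 2 ≤ b * x := sq_le_mul_of_root hb habc hp hx hroot
  refine posRoot_le_of_le_sq (by positivity) hx ?_
  nlinarith [mul_le_mul_of_nonneg_left hkey (sub_nonneg.2 hpq)]

theorem stmt_2 (n : ℕ) (s y : Fin n → ℝ) (hsy : 0 < ∑ i, s i * y i) :
    let c : ℝ := ∑ i, s i * y i
    MonotoneOn (fun γ : ℝ => ((∑ i, s i ^ 2) - (∑ i, y i ^ 2) / γ ^ 2 +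
      Real.sqrt (((∑ i, s i ^ 2) - (∑ i, y i ^ 2) / γ ^ 2) ^ 2 + 4 * c ^ 2 / γ ^ 2)) / (2 * c))
      (Set.Ioi 0) := by
  intro c
  have habc : c ^ 2 ≤ (∑ i, s i ^ 2) * ∑ i, y i ^ 2 := Finset.sum_mul_sq_le_sq_mul_sq _ s y
  have hb : 0 ≤ ∑ i, y i ^ 2 := Finset.sum_nonneg fun i _ => sq_nonneg (y i)
  have hroot := antitoneOn_posRoot hb hsy.ne' habc
  have hinv : AntitoneOn (fun γ : ℝ => (γ ^ 2)⁻¹) (Ioi 0) := fun γ₁ h₁ _ _ h₁₂ =>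
    inv_anti₀ (pow_pos h₁ 2) (pow_le_pow_left₀ (le_of_lt h₁) h₁₂ 2)
  have hmaps : MapsTo (fun γ : ℝ => (γ ^ 2)⁻¹) (Ioi 0) (Ioi 0) := fun γ (hγ : 0 < γ) =>
    (inv_pos.2 (pow_pos hγ 2) : 0 < (γ ^ 2)⁻¹)
  have hmono : MonotoneOn (fun γ : ℝ => posRoot (∑ i, s i ^ 2 - (∑ i, y i ^ 2) * (γ ^ 2)⁻¹)
      (c ^ 2 * (γ ^ 2)⁻¹) / c) (Ioi 0) :=
    (monotone_div_right_of_nonneg hsy.le).comp_monotoneOn (hroot.comp hinv hmaps)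
  refine hmono.congr fun γ _ => ?_
  simp only [posRoot, ← div_eq_mul_inv, mul_div_assoc, div_div]
end

section
/- Let $s, y \in \mathbb{R}^n$ with $s^T y > 0$ and suppose $s$ and $y$ are linearly independent. Then the function $\gamma \mapsto \alpha^{BB}(\gamma) = \frac{\|s\|^2 - \|y\|^2/\gamma^2 + \sqrt{(\|s\|^2 - \|y\|^2/\gamma^2)^2 + 4(s^Ty)^2/\gamma^2}}{2 s^T y}$ is strictly increasing on $(0, \infty)$. -/
/-! With `A = ‖s‖²`, `B = ‖y‖²`, `c = sᵀy` and `t = 1/γ²`, the numerator is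
`g t = A - B t + √((A - B t)² + 4 c² t)`, and `t` decreases in `γ`, so it suffices that `g` is
strictly decreasing. With `Q` the radicand, squaring reduces `g t₁ < g t₂` for `t₂ < t₁` to
`2c² - AB + B² t₂ < B √Q(t₂)`, which holds because `B² Q(t₂) - (2c² - AB + B² t₂)² = 4c²(AB - c²)`
is positive by the strict Cauchy–Schwarz inequality for the independent vectors `s, y`. -/

open Finset

lemma sum_sq_pos_of_ne_zero {ι : Type*} [Fintype ι] {v : ι → ℝ} (hv : v ≠ 0) :
    0 < ∑ i, v i ^ 2 := by
  obtain ⟨i, hi⟩ := Function.ne_iff.mp hv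
  exact sum_pos' (fun j _ ↦ sq_nonneg (v j)) ⟨i, mem_univ i, sq_pos_of_ne_zero hi⟩

theorem sq_sum_mul_lt_sum_sq_mul_sum_sq {ι : Type*} [Fintype ι] {s y : ι → ℝ}
    (h : LinearIndependent ℝ ![s, y]) :
    (∑ i, s i * y i) ^ 2 < (∑ i, s i ^ 2) * ∑ i, y i ^ 2 := by
  set c := ∑ i, s i * y i
  set B := ∑ i, y i ^ 2
  have hB : 0 < B := sum_sq_pos_of_ne_zero (by simpa using h.ne_zero 1)
  -- `B • s - c • y` is `‖y‖²` times the component of `s` orthogonal to `y`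
  have hres : B • s - c • y ≠ 0 := by
    intro h0
    refine hB.ne' (LinearIndependent.pair_iff.mp h B (-c) ?_).1
    rwa [neg_smul, ← sub_eq_add_neg]
  have hexpand : ∑ i, (B • s - c • y) i ^ 2 =
      B ^ 2 * ∑ i, s i ^ 2 - 2 * B * c * ∑ i, s i * y i + c ^ 2 * ∑ i, y i ^ 2 := by
    simp only [mul_sum, ← sum_sub_distrib, ← sum_add_distrib]
    exact sum_congr rfl fun i _ ↦ by simp only [Pi.sub_apply, Pi.smul_apply, smul_eq_mul]; ring
  have hpos : 0 < B * ((∑ i, s i ^ 2) * B - c ^ 2) :=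
    calc 0 < ∑ i, (B • s - c • y) i ^ 2 := sum_sq_pos_of_ne_zero hres
      _ = _ := by rw [hexpand]; ring
  linarith [(mul_pos_iff_of_pos_left hB).mp hpos]

theorem strictAntiOn_sub_add_sqrt {A B c : ℝ} (hB : 0 < B) (hc : c ≠ 0) (hAB : c ^ 2 < A * B) :
    StrictAntiOn (fun t ↦ A - B * t + √((A - B * t) ^ 2 + 4 * c ^ 2 * t)) (Set.Ici 0) := by
  intro t₂ (ht₂ : 0 ≤ t₂) t₁ _ ht
  set Q₂ := (A - B * t₂) ^ 2 + 4 * c ^ 2 * t₂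
  set L := 2 * c ^ 2 - A * B + B ^ 2 * t₂
  have hL : L < B * √Q₂ := by
    rw [← Real.sqrt_sq hB.le, ← Real.sqrt_mul (sq_nonneg B)]
    refine Real.lt_sqrt_of_sq_lt ?_
    have hgap : B ^ 2 * Q₂ - L ^ 2 = 4 * c ^ 2 * (A * B - c ^ 2) := by ring
    have : 0 < 4 * c ^ 2 * (A * B - c ^ 2) := mul_pos (by positivity) (sub_pos.mpr hAB)
    linarith
  -- `Q₁ - Q₂ = B² (t₁ - t₂)² + 2 (t₁ - t₂) L`, so squaring reduces this to `hL`
  have hsqrt : √((A - B * t₁) ^ 2 + 4 * c ^ 2 * t₁) < B * (t₁ - t₂) + √Q₂ := by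
    have hQ₂ : 0 ≤ Q₂ := by positivity
    rw [Real.sqrt_lt' (by nlinarith [Real.sqrt_nonneg Q₂])]
    nlinarith [Real.sq_sqrt hQ₂, mul_lt_mul_of_pos_left hL (sub_pos.mpr ht)]
  dsimp only
  linarith

theorem stmt_3 (n : ℕ) (s y : Fin n → ℝ) (hsy : 0 < ∑ i, s i * y i)
    (hind : LinearIndependent ℝ ![s, y]) :
    let c : ℝ := ∑ i, s i * y i
    StrictMonoOn (fun γ : ℝ => ((∑ i, s i ^ 2) - (∑ i, y i ^ 2) / γ ^ 2 +
      Real.sqrt (((∑ i, s i ^ 2) - (∑ i, y i ^ 2) / γ ^ 2) ^ 2 + 4 * c ^ 2 / γ ^ 2)) / (2 * c))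
      (Set.Ioi 0) := by
  intro c
  have hy : 0 < ∑ i, y i ^ 2 := sum_sq_pos_of_ne_zero (by simpa using hind.ne_zero 1)
  have hg := strictAntiOn_sub_add_sqrt hy hsy.ne' (sq_sum_mul_lt_sum_sq_mul_sum_sq hind)
  have hinv : StrictAntiOn (fun γ : ℝ ↦ (γ ^ 2)⁻¹) (Set.Ioi 0) := fun a (ha : 0 < a) b _ hab ↦ by
    dsimp only; gcongr
  intro a ha b hb hab
  have := hg.comp hinv (fun γ (hγ : 0 < γ) ↦ (inv_pos.mpr (pow_pos hγ 2)).le) ha hb hab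
  simp only [Function.comp_apply, ← div_eq_mul_inv] at this
  exact div_lt_div_of_pos_right this (by positivity)
end

section
/- Let $s, y \in \mathbb{R}^n$ with $s^T y > 0$. With $\alpha^{BB}(\gamma) = \frac{\|s\|^2 - \|y\|^2/\gamma^2 + \sqrt{(\|s\|^2 - \|y\|^2/\gamma^2)^2 + 4(s^Ty)^2/\gamma^2}}{2 s^T y}$, we have $\lim_{\gamma \to 0^+} \alpha^{BB}(\gamma) = \frac{s^Ty}{\|y\|^2}$. -/
theorem stmt_5 (n : ℕ) (s y : Fin n → ℝ) (hsy : 0 < ∑ i, s i * y i) :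
    let c : ℝ := ∑ i, s i * y i
    Filter.Tendsto (fun γ : ℝ => ((∑ i, s i ^ 2) - (∑ i, y i ^ 2) / γ ^ 2 +
      Real.sqrt (((∑ i, s i ^ 2) - (∑ i, y i ^ 2) / γ ^ 2) ^ 2 + 4 * c ^ 2 / γ ^ 2)) / (2 * c))
      (nhdsWithin 0 (Set.Ioi 0)) (nhds (c / (∑ i, y i ^ 2))) := by
  intro c
  set A : ℝ := ∑ i, s i ^ 2 with hA
  set B : ℝ := ∑ i, y i ^ 2 with hB
  have hc : 0 < c := hsy
  have hBnn : 0 ≤ B := Finset.sum_nonneg fun i _ => sq_nonneg _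
  have hBpos : 0 < B := by
    rcases hBnn.lt_or_eq with h | h
    · exact h
    · exfalso
      have hy : ∀ i, y i = 0 := fun i =>
        pow_eq_zero_iff (two_ne_zero) |>.1
          ((Finset.sum_eq_zero_iff_of_nonneg (fun i _ => sq_nonneg (y i))).1 h.symm i
            (Finset.mem_univ i))
      rw [Finset.sum_congr rfl (fun i _ => by rw [hy i, mul_zero]),
        Finset.sum_const_zero] at hsy
      exact lt_irrefl 0 hsy
  -- the rationalized form
  set g : ℝ → ℝ := fun γ => 2 * c /
      (Real.sqrt ((A * γ ^ 2 - B) ^ 2 + 4 * c ^ 2 * γ ^ 2) + B - A * γ ^ 2) with hg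
  have hgt : Filter.Tendsto g (nhdsWithin 0 (Set.Ioi 0)) (nhds (c / B)) := by
    have hcont : ContinuousAt g 0 := by
      apply ContinuousAt.div
      · fun_prop
      · fun_prop
      · simp only [ne_eq]
        rw [show (A * (0:ℝ) ^ 2 - B) ^ 2 + 4 * c ^ 2 * (0:ℝ) ^ 2 = B ^ 2 by ring,
          Real.sqrt_sq hBnn]
        intro h; nlinarith
    have := hcont.tendsto
    have h0 : g 0 = c / B := by
      simp only [hg]
      rw [show (A * (0:ℝ) ^ 2 - B) ^ 2 + 4 * c ^ 2 * (0:ℝ) ^ 2 = B ^ 2 by ring,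
        Real.sqrt_sq hBnn]
      rw [show B + B - A * (0:ℝ) ^ 2 = 2 * B by ring,
        mul_div_mul_left _ _ (by norm_num : (2:ℝ) ≠ 0)]
    rw [h0] at this
    exact this.mono_left nhdsWithin_le_nhds
  refine hgt.congr' ?_
  filter_upwards [self_mem_nhdsWithin] with γ (hγ : 0 < γ)
  have hγ2 : (0:ℝ) < γ ^ 2 := by positivity
  set K : ℝ := (A * γ ^ 2 - B) ^ 2 + 4 * c ^ 2 * γ ^ 2 with hK
  have hKnn : 0 ≤ K := by positivity
  set D : ℝ := Real.sqrt K with hD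
  have hD2 : D ^ 2 = K := Real.sq_sqrt hKnn
  -- sqrt of the original argument equals D / γ²
  have hsqrt : Real.sqrt ((A - B / γ ^ 2) ^ 2 + 4 * c ^ 2 / γ ^ 2) = D / γ ^ 2 := by
    have harg : (A - B / γ ^ 2) ^ 2 + 4 * c ^ 2 / γ ^ 2 = (D / γ ^ 2) ^ 2 := by
      rw [div_pow, hD2, hK]
      field_simp
    rw [harg, Real.sqrt_sq (by positivity)]
  have habs : |A * γ ^ 2 - B| < D := by
    have hlt : (A * γ ^ 2 - B) ^ 2 < K := by
      rw [hK]
      have : 0 < 4 * c ^ 2 * γ ^ 2 := by positivity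
      linarith
    have := Real.sqrt_lt_sqrt (sq_nonneg _) hlt
    rwa [Real.sqrt_sq_eq_abs] at this
  have hden : 0 < D + B - A * γ ^ 2 := by
    have h2 := (abs_lt.1 habs).2
    linarith
  show g γ = _
  simp only [hg, hsqrt]
  rw [eq_div_iff (by positivity : (2:ℝ) * c ≠ 0), div_mul_eq_mul_div,
    div_eq_iff hden.ne']
  have hγ0 : γ ≠ 0 := hγ.ne'
  field_simp
  nlinarith [hD2, hγ2]
end

section
/- Let $s, y \in \mathbb{R}^n$ with $s^T y > 0$ and $\gamma > 0$. Define $\alpha^{BB'}(\gamma) = \frac{2 s^T y}{\|y\|^2 - \|s\|^2/\gamma^2 + \sqrt{(\|s\|^2/\gamma^2 - \|y\|^2)^2 + 4(s^Ty)^2/\gamma^2}}$, $\alpha^{BB1} = \frac{\|s\|^2}{s^Ty}$, and $\alpha^{BB2} = \frac{s^Ty}{\|y\|^2}$. Then $\alpha^{BB2} \le \alpha^{BB'}(\gamma) \le \alpha^{BB1}$, and $\gamma \mapsto \alpha^{BB'}(\gamma)$ is monotonically nonincreasing on $(0,\infty)$. -/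
/-!
Write `A = ‖s‖²`, `B = ‖y‖²`, `c = sᵀy`, so that `α^{BB'}(γ) = bbStep A B c γ`. Clearing the square
root shows that it is the positive root of `c α² + (γ² B - A) α - c γ²`, i.e. of
`γ² (c - B α) = α (c α - A)`. The two sides of this equation have opposite signs outside
`[c / B, A / c]`, an interval that is nonempty by Cauchy–Schwarz, so the root lies in it.
Increasing `γ` adds `(γ₂² - γ₁²)(B α - c) ≥ 0` to the value of the quadratic at the old root,
so the new root cannot be larger.
-/

open Real Set

noncomputable def bbStep (A B c γ : ℝ) : ℝ :=
  2 * c / (B - A / γ ^ 2 + √((A / γ ^ 2 - B) ^ 2 + 4 * c ^ 2 / γ ^ 2))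

def bbQuadratic (A B c γ α : ℝ) : ℝ :=
  c * α ^ 2 + (γ ^ 2 * B - A) * α - c * γ ^ 2

section

variable {A B c γ α : ℝ}

theorem mem_Icc_of_bbQuadratic_eq_zero (hB : 0 < B) (hc : 0 < c) (hCS : c ^ 2 ≤ A * B)
    (hγ : γ ≠ 0) (hα : 0 < α) (hroot : bbQuadratic A B c γ α = 0) :
    α ∈ Icc (c / B) (A / c) := by
  have hγ2 : 0 < γ ^ 2 := by positivity
  have hroot' : γ ^ 2 * (c - B * α) = α * (c * α - A) := by
    unfold bbQuadratic at hroot; linear_combination -hroot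
  have hcB : c / B ≤ A / c := by rw [div_le_div_iff₀ hB hc]; nlinarith
  constructor
  · by_contra! h
    have hBα : 0 < c - B * α := by rw [lt_div_iff₀ hB] at h; linarith
    have : A < c * α := by nlinarith [mul_pos hγ2 hBα]
    have : A / c < α := by rwa [div_lt_iff₀' hc]
    linarith
  · by_contra! h
    have hcα : 0 < c * α - A := by rw [div_lt_iff₀' hc] at h; linarith
    have : B * α < c := by nlinarith [mul_pos hα hcα]
    have : α < c / B := by rwa [lt_div_iff₀' hB]
    linarith

theorem bbQuadratic_root_le_of_sq_le {γ₁ γ₂ α₁ α₂ : ℝ} (hB : 0 < B) (hc : 0 < c)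
    (hγ : γ₁ ^ 2 ≤ γ₂ ^ 2) (hα₁ : c / B ≤ α₁) (hα₂ : 0 < α₂)
    (hroot₁ : bbQuadratic A B c γ₁ α₁ = 0) (hroot₂ : bbQuadratic A B c γ₂ α₂ = 0) :
    α₂ ≤ α₁ := by
  unfold bbQuadratic at hroot₁ hroot₂
  have hBα₁ : 0 ≤ B * α₁ - c := by rw [div_le_iff₀ hB] at hα₁; linarith
  have hα₁_pos : 0 < α₁ := (div_pos hc hB).trans_le hα₁
  have hq₁ : 0 ≤ bbQuadratic A B c γ₂ α₁ := by
    unfold bbQuadratic; nlinarith [mul_nonneg (sub_nonneg.2 hγ) hBα₁]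
  have hfactor : α₂ * bbQuadratic A B c γ₂ α₁ = (α₁ - α₂) * (c * α₁ * α₂ + c * γ₂ ^ 2) := by
    unfold bbQuadratic; linear_combination α₁ * hroot₂
  by_contra! h
  have : (α₁ - α₂) * (c * α₁ * α₂ + c * γ₂ ^ 2) < 0 :=
    mul_neg_of_neg_of_pos (by linarith) (by positivity)
  linarith [mul_nonneg hα₂.le hq₁]

theorem bbStep_denom_pos (hc : c ≠ 0) (hγ : γ ≠ 0) :
    0 < B - A / γ ^ 2 + √((A / γ ^ 2 - B) ^ 2 + 4 * c ^ 2 / γ ^ 2) := by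
  have : A / γ ^ 2 - B < √((A / γ ^ 2 - B) ^ 2 + 4 * c ^ 2 / γ ^ 2) :=
    Real.lt_sqrt_of_sq_lt (lt_add_of_pos_right _ (by positivity))
  linarith

theorem bbStep_pos (hc : 0 < c) (hγ : γ ≠ 0) : 0 < bbStep A B c γ :=
  div_pos (by positivity) (bbStep_denom_pos hc.ne' hγ)

theorem bbQuadratic_bbStep (hc : c ≠ 0) (hγ : γ ≠ 0) :
    bbQuadratic A B c γ (bbStep A B c γ) = 0 := by
  have hD := (bbStep_denom_pos (A := A) (B := B) hc hγ).ne'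
  have hS := Real.sq_sqrt (by positivity : 0 ≤ (A / γ ^ 2 - B) ^ 2 + 4 * c ^ 2 / γ ^ 2)
  rw [bbQuadratic, bbStep, sub_eq_zero]
  generalize √((A / γ ^ 2 - B) ^ 2 + 4 * c ^ 2 / γ ^ 2) = S at hD hS ⊢
  have hD' : B * γ ^ 2 - A + γ ^ 2 * S ≠ 0 := by
    convert mul_ne_zero (pow_ne_zero 2 hγ) hD using 1
    field_simp
  field_simp at hS ⊢
  rw [div_eq_one_iff_eq (pow_ne_zero 2 (by convert hD' using 1; ring))]
  linear_combination -hS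

theorem bbStep_mem_Icc (hB : 0 < B) (hc : 0 < c) (hCS : c ^ 2 ≤ A * B) (hγ : γ ≠ 0) :
    bbStep A B c γ ∈ Icc (c / B) (A / c) :=
  mem_Icc_of_bbQuadratic_eq_zero hB hc hCS hγ (bbStep_pos hc hγ) (bbQuadratic_bbStep hc.ne' hγ)

theorem bbStep_antitoneOn (hB : 0 < B) (hc : 0 < c) (hCS : c ^ 2 ≤ A * B) :
    AntitoneOn (bbStep A B c) (Ioi 0) := by
  intro γ₁ hγ₁ γ₂ hγ₂ hle
  exact bbQuadratic_root_le_of_sq_le hB hc (pow_le_pow_left₀ (le_of_lt hγ₁) hle 2)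
    (bbStep_mem_Icc hB hc hCS (ne_of_gt hγ₁)).1 (bbStep_pos hc (ne_of_gt hγ₂))
    (bbQuadratic_bbStep hc.ne' (ne_of_gt hγ₁)) (bbQuadratic_bbStep hc.ne' (ne_of_gt hγ₂))

end

theorem stmt_6 (n : ℕ) (s y : Fin n → ℝ) (hsy : 0 < ∑ i, s i * y i) :
    let c : ℝ := ∑ i, s i * y i
    let α' : ℝ → ℝ := fun γ => (2 * c) /
      ((∑ i, y i ^ 2) - (∑ i, s i ^ 2) / γ ^ 2 +
        Real.sqrt (((∑ i, s i ^ 2) / γ ^ 2 - (∑ i, y i ^ 2)) ^ 2 + 4 * c ^ 2 / γ ^ 2))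
    (∀ γ : ℝ, 0 < γ → c / (∑ i, y i ^ 2) ≤ α' γ ∧ α' γ ≤ (∑ i, s i ^ 2) / c) ∧
    AntitoneOn α' (Set.Ioi 0) := by
  intro c α'
  have hCS : c ^ 2 ≤ (∑ i, s i ^ 2) * ∑ i, y i ^ 2 := Finset.sum_mul_sq_le_sq_mul_sq _ s y
  have hB : 0 < ∑ i, y i ^ 2 :=
    pos_of_mul_pos_right ((pow_pos hsy 2).trans_le hCS) (Finset.sum_nonneg fun i _ => sq_nonneg _)
  exact ⟨fun γ hγ => bbStep_mem_Icc hB hsy hCS hγ.ne', bbStep_antitoneOn hB hsy hCS⟩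
end

section
/- Let $s, y \in \mathbb{R}^n$ with $s^T y > 0$. With $\alpha^{BB'}(\gamma) = \frac{2 s^T y}{\|y\|^2 - \|s\|^2/\gamma^2 + \sqrt{(\|s\|^2/\gamma^2 - \|y\|^2)^2 + 4(s^Ty)^2/\gamma^2}}$, we have $\lim_{\gamma \to 0^+} \alpha^{BB'}(\gamma) = \frac{\|s\|^2}{s^Ty}$ and $\lim_{\gamma \to +\infty} \alpha^{BB'}(\gamma) = \frac{s^Ty}{\|y\|^2}$. -/
open Filter Real Set

theorem stmt_7 (n : ℕ) (s y : Fin n → ℝ) (hsy : 0 < ∑ i, s i * y i) :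
    let c : ℝ := ∑ i, s i * y i
    let α' : ℝ → ℝ := fun γ => (2 * c) /
      ((∑ i, y i ^ 2) - (∑ i, s i ^ 2) / γ ^ 2 +
        Real.sqrt (((∑ i, s i ^ 2) / γ ^ 2 - (∑ i, y i ^ 2)) ^ 2 + 4 * c ^ 2 / γ ^ 2))
    Filter.Tendsto α' (nhdsWithin 0 (Set.Ioi 0)) (nhds ((∑ i, s i ^ 2) / c)) ∧
    Filter.Tendsto α' Filter.atTop (nhds (c / (∑ i, y i ^ 2))) := by
  intro c α'
  have hc : 0 < c := hsy
  set S := ∑ i, s i ^ 2 with hSdef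
  set Y := ∑ i, y i ^ 2 with hYdef
  have hS : 0 ≤ S := Finset.sum_nonneg fun i _ => sq_nonneg _
  have hY : 0 ≤ Y := Finset.sum_nonneg fun i _ => sq_nonneg _
  have hYpos : 0 < Y := by
    rcases hY.lt_or_eq with h | h
    · exact h
    · exfalso
      have hz : ∀ i ∈ Finset.univ, y i = 0 := by
        intro i hi
        have := (Finset.sum_eq_zero_iff_of_nonneg (fun i _ => sq_nonneg (y i))).mp h.symm i hi
        exact pow_eq_zero_iff (two_ne_zero) |>.mp this
      have : c = 0 := by
        show (∑ i, s i * y i) = 0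
        exact Finset.sum_eq_zero fun i hi => by rw [hz i hi, mul_zero]
      linarith
  constructor
  · -- γ → 0+
    have key : ∀ γ ∈ Set.Ioi (0:ℝ), α' γ =
        (Real.sqrt ((S - Y * γ ^ 2) ^ 2 + 4 * c ^ 2 * γ ^ 2) + (S - Y * γ ^ 2)) / (2 * c) := by
      intro γ hγ
      have hγ0 : (0:ℝ) < γ := hγ
      have hγ2 : (0:ℝ) < γ ^ 2 := by positivity
      set A := S - Y * γ ^ 2 with hA
      set R := Real.sqrt (A ^ 2 + 4 * c ^ 2 * γ ^ 2) with hRdef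
      have hR0 : 0 ≤ R := Real.sqrt_nonneg _
      have hR2 : R ^ 2 = A ^ 2 + 4 * c ^ 2 * γ ^ 2 := Real.sq_sqrt (by positivity)
      have hAR : A < R := by
        have h1 : Real.sqrt (A ^ 2) < R := by
          apply Real.sqrt_lt_sqrt (sq_nonneg _)
          have : 0 < 4 * c ^ 2 * γ ^ 2 := by positivity
          linarith
        calc A ≤ |A| := le_abs_self A
          _ = Real.sqrt (A ^ 2) := (Real.sqrt_sq_eq_abs A).symm
          _ < R := h1
      have hsqrt : Real.sqrt ((S / γ ^ 2 - Y) ^ 2 + 4 * c ^ 2 / γ ^ 2) = R / γ ^ 2 := by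
        have h1 : (S / γ ^ 2 - Y) ^ 2 + 4 * c ^ 2 / γ ^ 2
            = (A ^ 2 + 4 * c ^ 2 * γ ^ 2) / (γ ^ 2) ^ 2 := by
          rw [hA]; field_simp
        rw [h1, Real.sqrt_div (by positivity), Real.sqrt_sq hγ2.le]
      show (2 * c) / (Y - S / γ ^ 2 + Real.sqrt ((S / γ ^ 2 - Y) ^ 2 + 4 * c ^ 2 / γ ^ 2))
          = (R + A) / (2 * c)
      rw [hsqrt]
      have hD : Y - S / γ ^ 2 + R / γ ^ 2 = (R - A) / γ ^ 2 := by
        rw [hA]; field_simp; ring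
      rw [hD]
      rw [div_eq_div_iff (div_pos (sub_pos.mpr hAR) hγ2).ne' (by positivity)]
      field_simp
      nlinarith [hR2]
    have hcont : Continuous fun γ : ℝ =>
        (Real.sqrt ((S - Y * γ ^ 2) ^ 2 + 4 * c ^ 2 * γ ^ 2) + (S - Y * γ ^ 2)) / (2 * c) := by
      apply Continuous.div_const
      exact (Real.continuous_sqrt.comp (by fun_prop)).add (by fun_prop)
    have hval : (Real.sqrt ((S - Y * (0:ℝ) ^ 2) ^ 2 + 4 * c ^ 2 * (0:ℝ) ^ 2) + (S - Y * (0:ℝ) ^ 2)) / (2 * c) = S / c := by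
      norm_num [Real.sqrt_sq hS]
      field_simp
      ring
    have h1 : Filter.Tendsto (fun γ : ℝ =>
        (Real.sqrt ((S - Y * γ ^ 2) ^ 2 + 4 * c ^ 2 * γ ^ 2) + (S - Y * γ ^ 2)) / (2 * c))
        (nhdsWithin 0 (Set.Ioi 0)) (nhds (S / c)) := by
      have h0 := hcont.tendsto 0
      rw [hval] at h0
      exact h0.mono_left nhdsWithin_le_nhds
    refine Filter.Tendsto.congr' ?_ h1
    filter_upwards [self_mem_nhdsWithin] with γ hγ
    exact (key γ hγ).symm
  · -- γ → ∞
    have hu : Filter.Tendsto (fun γ : ℝ => 1 / γ ^ 2) Filter.atTop (nhds 0) := by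
      have h := tendsto_pow_atTop (α := ℝ) (n := 2) two_ne_zero
      exact Filter.Tendsto.congr (fun x => by simp [Function.comp, one_div])
        (tendsto_inv_atTop_zero.comp h)
    have hden : Filter.Tendsto (fun u : ℝ => Y - S * u + Real.sqrt ((S * u - Y) ^ 2 + 4 * c ^ 2 * u))
        (nhds 0) (nhds (2 * Y)) := by
      have hcont : Continuous fun u : ℝ => Y - S * u + Real.sqrt ((S * u - Y) ^ 2 + 4 * c ^ 2 * u) :=
        (by fun_prop : Continuous fun u : ℝ => Y - S * u).add
          (Real.continuous_sqrt.comp (by fun_prop))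
      have := hcont.tendsto 0
      simpa [Real.sqrt_sq hY, two_mul] using this
    have hf : Filter.Tendsto (fun u : ℝ => 2 * c / (Y - S * u + Real.sqrt ((S * u - Y) ^ 2 + 4 * c ^ 2 * u)))
        (nhds 0) (nhds (c / Y)) := by
      have := Filter.Tendsto.div (tendsto_const_nhds (x := 2 * c)) hden (by positivity)
      have heq : 2 * c / (2 * Y) = c / Y := by field_simp
      rwa [heq] at this
    have hcomp := hf.comp hu
    refine Filter.Tendsto.congr ?_ hcomp
    intro γ
    simp only [Function.comp, α']
    simp only [← hSdef, ← hYdef]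
    ring_nf
end

section
/- Let $s, y \in \mathbb{R}^n$ with $s^T y > 0$ and suppose $\frac{\|s\|^2}{s^Ty} > \frac{s^Ty}{\|y\|^2}$ (i.e., $\alpha^{BB1} > \alpha^{BB2}$). Then for every $\gamma > 0$, $\alpha^{BB}(\gamma) = \frac{\|s\|^2 - \|y\|^2/\gamma^2 + \sqrt{(\|s\|^2 - \|y\|^2/\gamma^2)^2 + 4(s^Ty)^2/\gamma^2}}{2 s^T y}$ satisfies the strict inequalities $\alpha^{BB2} < \alpha^{BB}(\gamma) < \alpha^{BB1}$, and hence there exists a unique $\tau \in (0,1)$ with $\alpha^{BB}(\gamma) = \tau\,\alpha^{BB1} + (1-\tau)\,\alpha^{BB2}$, namely $\tau = \frac{\alpha^{BB}(\gamma) - \alpha^{BB2}}{\alpha^{BB1} - \alpha^{BB2}}$. -/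
/-!
`αBB(γ)` is the larger root of `q(α) = c α² - (‖s‖² - ‖y‖²/γ²) α - c/γ²`, whose other root is
negative. Direct computation gives `q(αBB2) = c (c² - ‖s‖²‖y‖²)/‖y‖⁴ < 0` and
`q(αBB1) = (‖s‖²‖y‖² - c²)/(c γ²) > 0`, where `c² < ‖s‖²‖y‖²` is exactly `αBB2 < αBB1`;
hence `αBB2 < αBB(γ) < αBB1`, and the weight `τ` of a point strictly between two reals is unique.
-/

section QuadraticRoot

variable {a b d x : ℝ}

lemma lt_quadratic_root_iff (ha : 0 < a) (hd : 0 < d) (hx : 0 ≤ x) :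
    x < (b + √(b ^ 2 + 4 * a * d)) / (2 * a) ↔ a * x ^ 2 - b * x - d < 0 := by
  rw [lt_div_iff₀ (by positivity), ← sub_lt_iff_lt_add']
  rcases lt_or_ge (x * (2 * a) - b) 0 with h | h
  · exact iff_of_true (h.trans_le (Real.sqrt_nonneg _)) (by nlinarith)
  · rw [Real.lt_sqrt h]
    constructor <;> intro <;> nlinarith

lemma quadratic_root_lt_iff (ha : 0 < a) (hd : 0 ≤ d) (hx : 0 ≤ x) :
    (b + √(b ^ 2 + 4 * a * d)) / (2 * a) < x ↔ 0 < a * x ^ 2 - b * x - d := by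
  rw [div_lt_iff₀ (by positivity), ← lt_sub_iff_add_lt']
  rcases le_or_gt (x * (2 * a) - b) 0 with h | h
  · exact iff_of_false (fun h' => (h'.trans_le h).not_ge (Real.sqrt_nonneg _)) (by nlinarith)
  · rw [Real.sqrt_lt' h]
    constructor <;> intro <;> nlinarith

end QuadraticRoot

-- `αBB(γ)` in terms of `A = ‖s‖²`, `B = ‖y‖²`, `c = sᵀy`.
noncomputable def bbStepSize (A B c γ : ℝ) : ℝ :=
  (A - B / γ ^ 2 + √((A - B / γ ^ 2) ^ 2 + 4 * c ^ 2 / γ ^ 2)) / (2 * c)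

section BBStepSize

variable {A B c γ : ℝ}

lemma bbStepSize_eq_quadratic_root :
    bbStepSize A B c γ =
      (A - B / γ ^ 2 + √((A - B / γ ^ 2) ^ 2 + 4 * c * (c / γ ^ 2))) / (2 * c) := by
  rw [bbStepSize, mul_div_assoc', mul_assoc, ← sq]

lemma div_lt_bbStepSize (hc : 0 < c) (hB : 0 < B) (hγ : 0 < γ) (hcAB : c ^ 2 < A * B) :
    c / B < bbStepSize A B c γ := by
  rw [bbStepSize_eq_quadratic_root, lt_quadratic_root_iff hc (by positivity) (by positivity)]
  have hq : c * (c / B) ^ 2 - (A - B / γ ^ 2) * (c / B) - c / γ ^ 2 =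
      c * (c ^ 2 - A * B) / B ^ 2 := by
    field_simp; ring
  rw [hq]
  exact div_neg_of_neg_of_pos (mul_neg_of_pos_of_neg hc (by linarith)) (by positivity)

lemma bbStepSize_lt_div (hc : 0 < c) (hγ : 0 < γ) (hA : 0 ≤ A) (hcAB : c ^ 2 < A * B) :
    bbStepSize A B c γ < A / c := by
  rw [bbStepSize_eq_quadratic_root, quadratic_root_lt_iff hc (by positivity) (by positivity)]
  have hq : c * (A / c) ^ 2 - (A - B / γ ^ 2) * (A / c) - c / γ ^ 2 =
      (A * B - c ^ 2) / (c * γ ^ 2) := by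
    field_simp; ring
  rw [hq]
  exact div_pos (by linarith) (by positivity)

end BBStepSize

lemma eq_convex_combination_iff {a b x : ℝ} (hab : a < b) (τ : ℝ) :
    x = τ * b + (1 - τ) * a ↔ τ = (x - a) / (b - a) := by
  rw [eq_div_iff (sub_ne_zero.2 hab.ne')]
  constructor <;> intro h <;> linarith

lemma div_sub_mem_Ioo {a b x : ℝ} (hax : a < x) (hxb : x < b) :
    (x - a) / (b - a) ∈ Set.Ioo (0 : ℝ) 1 :=
  ⟨div_pos (sub_pos.2 hax) (sub_pos.2 (hax.trans hxb)),
    (div_lt_one (sub_pos.2 (hax.trans hxb))).2 (by linarith)⟩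

theorem stmt_8 (n : ℕ) (s y : Fin n → ℝ) (hsy : 0 < ∑ i, s i * y i)
    (hgt : (∑ i, s i * y i) / (∑ i, y i ^ 2) < (∑ i, s i ^ 2) / (∑ i, s i * y i))
    (γ : ℝ) (hγ : 0 < γ) :
    let c : ℝ := ∑ i, s i * y i
    let αBB1 : ℝ := (∑ i, s i ^ 2) / c
    let αBB2 : ℝ := c / (∑ i, y i ^ 2)
    let αγ : ℝ := ((∑ i, s i ^ 2) - (∑ i, y i ^ 2) / γ ^ 2 +
      Real.sqrt (((∑ i, s i ^ 2) - (∑ i, y i ^ 2) / γ ^ 2) ^ 2 + 4 * c ^ 2 / γ ^ 2)) / (2 * c)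
    let τ : ℝ := (αγ - αBB2) / (αBB1 - αBB2)
    αBB2 < αγ ∧ αγ < αBB1 ∧ τ ∈ Set.Ioo (0:ℝ) 1 ∧
    αγ = τ * αBB1 + (1 - τ) * αBB2 ∧
    ∀ τ' : ℝ, τ' ∈ Set.Ioo (0:ℝ) 1 → αγ = τ' * αBB1 + (1 - τ') * αBB2 → τ' = τ := by
  intro c αBB1 αBB2 αγ τ
  have hcauchy : c ^ 2 ≤ (∑ i, s i ^ 2) * ∑ i, y i ^ 2 := Finset.sum_mul_sq_le_sq_mul_sq _ s y
  -- `hgt` alone would allow `y = 0` (where `c / 0 = 0`); Cauchy–Schwarz excludes it.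
  have hB : 0 < ∑ i, y i ^ 2 :=
    pos_of_mul_pos_right ((pow_pos hsy 2).trans_le hcauchy) (by positivity)
  have hcAB : c ^ 2 < (∑ i, s i ^ 2) * ∑ i, y i ^ 2 := by
    rw [div_lt_div_iff₀ hB hsy] at hgt
    linarith
  have hlow : αBB2 < αγ := div_lt_bbStepSize hsy hB hγ hcAB
  have hup : αγ < αBB1 := bbStepSize_lt_div hsy hγ (by positivity) hcAB
  have hweight := eq_convex_combination_iff (x := αγ) (hlow.trans hup)
  exact ⟨hlow, hup, div_sub_mem_Ioo hlow hup, (hweight τ).2 rfl, fun τ' _ h => (hweight τ').1 h⟩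
end

section
/- Define $h(a, b) = \frac{a - 1/b + \sqrt{(1/b - a)^2 + 4}}{2}$ for reals $a \ge b > 0$. Then $\lim_{b \le a \to 0^+} \frac{h(a,b)}{b} = 1$ in the following sense: for every $\varepsilon > 0$ there exists $\delta > 0$ such that for all $0 < b \le a \le \delta$, $\left|\frac{h(a,b)}{b} - 1\right| < \varepsilon$. -/
theorem stmt_12 :
    ∀ ε : ℝ, 0 < ε → ∃ δ : ℝ, 0 < δ ∧ ∀ a b : ℝ, 0 < b → b ≤ a → a ≤ δ →
      |((a - 1 / b + Real.sqrt ((1 / b - a) ^ 2 + 4)) / 2) / b - 1| < ε := by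
  intro ε hε
  refine ⟨min (ε / 4) (1 / 2), by positivity, ?_⟩
  intro a b hb hba haδ
  have hδε : a ≤ ε / 4 := le_trans haδ (min_le_left _ _)
  have hδh : a ≤ 1 / 2 := le_trans haδ (min_le_right _ _)
  have hbne : b ≠ 0 := ne_of_gt hb
  set t : ℝ := 1 / b - a with ht
  set S : ℝ := Real.sqrt (t ^ 2 + 4) with hS
  have hS2 : S ^ 2 = t ^ 2 + 4 := Real.sq_sqrt (by positivity)
  have hSgt : |t| < S := by
    rw [← Real.sqrt_sq_eq_abs]
    exact Real.sqrt_lt_sqrt (by positivity) (by linarith)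
  have hSt : 0 < S + t := by
    have := abs_lt.mp hSgt
    linarith [this.1]
  set s : ℝ := a * b with hs
  have hb2 : b ≤ a := hba
  have ha : 0 < a := lt_of_lt_of_le hb hba
  have hs0 : 0 < s := mul_pos ha hb
  have hsle : s ≤ 1 / 4 := by
    have : s ≤ (1/2) * (1/2) := by
      apply mul_le_mul hδh (le_trans hba hδh) (le_of_lt hb) (by norm_num)
    linarith
  have hble : b ≤ ε / 4 := le_trans hba hδε
  -- D
  set D : ℝ := (1 - s) + Real.sqrt ((1 - s) ^ 2 + 4 * b ^ 2) with hD
  have hbS : b * S = Real.sqrt ((1 - s) ^ 2 + 4 * b ^ 2) := by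
    rw [hS, ← Real.sqrt_sq (le_of_lt hb), ← Real.sqrt_mul (by positivity)]
    congr 1
    rw [Real.sq_sqrt (by positivity), ht, hs, one_div]
    have hu : b * b⁻¹ = 1 := mul_inv_cancel₀ hbne
    linear_combination (b * b⁻¹ + 1 - 2 * a * b) * hu
  have hDeq : D = b * (S + t) := by
    rw [hD, ← hbS, ht]
    field_simp
    ring
  have hDpos : 0 < D := by rw [hDeq]; positivity
  -- expression = 2 / D
  have hkey : ((a - 1 / b + S) / 2) / b = 2 / D := by
    rw [div_div, div_eq_div_iff (by positivity) (ne_of_gt hDpos), hDeq]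
    have h4 : (a - 1 / b + S) * (b * (S + t)) = b * (S ^ 2 - t ^ 2) := by
      rw [ht]; ring
    rw [h4, hS2]
    ring
  rw [hkey]
  -- bounds on D
  have hDlow : 2 * (1 - s) ≤ D := by
    have h1 : (1 - s) ≤ Real.sqrt ((1 - s) ^ 2 + 4 * b ^ 2) := by
      have h2 := Real.sqrt_le_sqrt (show (1-s)^2 ≤ (1-s)^2 + 4*b^2 by nlinarith [sq_nonneg b])
      rwa [Real.sqrt_sq (by linarith : (0:ℝ) ≤ 1 - s)] at h2
    rw [hD]; linarith
  have hDhigh : D ≤ 2 - 2 * s + 2 * b := by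
    have h1 : Real.sqrt ((1 - s) ^ 2 + 4 * b ^ 2) ≤ (1 - s) + 2 * b := by
      have h2 := Real.sqrt_le_sqrt (show (1-s)^2 + 4*b^2 ≤ ((1-s) + 2*b)^2 by nlinarith)
      rwa [Real.sqrt_sq (by linarith : (0:ℝ) ≤ (1-s) + 2*b)] at h2
    rw [hD]; linarith
  have habs : 2 / D - 1 = (2 - D) / D := by
    field_simp
  rw [habs, abs_div, abs_of_pos hDpos, div_lt_iff₀ hDpos]
  have h1 : |2 - D| ≤ 2 * s + 2 * b := by
    rw [abs_le]
    constructor <;> linarith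
  have h2 : s ≤ (1/2) * b := by
    rw [hs]; nlinarith
  have h3 : ε * (2 * (1 - s)) ≤ ε * D := mul_le_mul_of_nonneg_left hDlow (le_of_lt hε)
  have h5 : ε * s ≤ ε * (1 / 4) := mul_le_mul_of_nonneg_left hsle (le_of_lt hε)
  linarith
end

section
/- Fix $\gamma > 0$, $A \in \mathbb{R}^{m \times n}$, $b \in \mathbb{R}^m$, and $x \in \mathbb{R}^n$. Consider minimizing $\|E\|_F^2 + \|r\|^2$ over $E \in \mathbb{R}^{m \times n}$ and $r \in \mathbb{R}^m$ subject to $(A+E)x\gamma = b\gamma + r$. The minimum value equals $\frac{\|Ax - b\|^2}{1/\gamma^2 + \|x\|^2}$, attained at $r = \frac{\gamma(Ax-b)}{1 + \gamma^2\|x\|^2}$ and $E = -\frac{\gamma^2 (Ax-b)x^T}{1 + \gamma^2\|x\|^2}$. -/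
theorem stmt_14 (m n : ℕ) (γ : ℝ) (hγ : 0 < γ)
    (A : Matrix (Fin m) (Fin n) ℝ) (b : Fin m → ℝ) (x : Fin n → ℝ) :
    let res : Fin m → ℝ := fun i => (∑ j, A i j * x j) - b i
    let Estar : Matrix (Fin m) (Fin n) ℝ :=
      fun i j => -(γ ^ 2 * res i * x j / (1 + γ ^ 2 * ∑ j, x j ^ 2))
    let rstar : Fin m → ℝ := fun i => γ * res i / (1 + γ ^ 2 * ∑ j, x j ^ 2)
    (∀ i, (∑ j, (A i j + Estar i j) * x j) * γ = b i * γ + rstar i) ∧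
    (∑ i, ∑ j, Estar i j ^ 2) + (∑ i, rstar i ^ 2)
      = (∑ i, res i ^ 2) / (1 / γ ^ 2 + ∑ j, x j ^ 2) ∧
    (∀ (E : Matrix (Fin m) (Fin n) ℝ) (r : Fin m → ℝ),
      (∀ i, (∑ j, (A i j + E i j) * x j) * γ = b i * γ + r i) →
      (∑ i, res i ^ 2) / (1 / γ ^ 2 + ∑ j, x j ^ 2) ≤ (∑ i, ∑ j, E i j ^ 2) + ∑ i, r i ^ 2) := by
  intro res Estar rstar
  set s : ℝ := ∑ j, x j ^ 2 with hs
  have hs0 : 0 ≤ s := Finset.sum_nonneg fun j _ => sq_nonneg _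
  set D : ℝ := 1 + γ ^ 2 * s with hD
  have hD0 : 0 < D := by positivity
  have hγ2 : (0:ℝ) < γ ^ 2 := by positivity
  set R : ℝ := ∑ i, res i ^ 2 with hR
  have hR0 : 0 ≤ R := Finset.sum_nonneg fun i _ => sq_nonneg _
  refine ⟨?_, ?_, ?_⟩
  · intro i
    have h1 : ∑ j, (A i j + Estar i j) * x j
        = (∑ j, A i j * x j) - γ ^ 2 * res i / D * s := by
      rw [Finset.sum_congr rfl (fun j _ => add_mul (A i j) (Estar i j) (x j)),
        Finset.sum_add_distrib]
      congr 1
      calc ∑ j, Estar i j * x j = ∑ j, -(γ ^ 2 * res i / D) * x j ^ 2 := by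
            refine Finset.sum_congr rfl fun j _ => ?_
            show -(γ ^ 2 * res i * x j / D) * x j = _
            ring
        _ = -(γ ^ 2 * res i / D) * s := by rw [← Finset.mul_sum]
        _ = _ := by ring
    rw [h1]
    show _ = b i * γ + γ * res i / D
    have hb : b i = (∑ j, A i j * x j) - res i := by simp [res]
    rw [hb]
    field_simp
    ring
  · have hE : ∀ i, ∑ j, Estar i j ^ 2 = γ ^ 4 * res i ^ 2 / D ^ 2 * s := by
      intro i
      calc ∑ j, Estar i j ^ 2 = ∑ j, γ ^ 4 * res i ^ 2 / D ^ 2 * x j ^ 2 := by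
            refine Finset.sum_congr rfl fun j _ => ?_
            show (-(γ ^ 2 * res i * x j / D)) ^ 2 = _
            field_simp
        _ = _ := by rw [← Finset.mul_sum]
    have hEtot : (∑ i, ∑ j, Estar i j ^ 2) = γ ^ 4 * s / D ^ 2 * R := by
      rw [Finset.sum_congr rfl fun i _ => hE i, hR, Finset.mul_sum]
      exact Finset.sum_congr rfl fun i _ => by ring
    have hrtot : (∑ i, rstar i ^ 2) = γ ^ 2 / D ^ 2 * R := by
      rw [hR, Finset.mul_sum]
      refine Finset.sum_congr rfl fun i _ => ?_
      show (γ * res i / D) ^ 2 = _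
      field_simp
    rw [hEtot, hrtot]
    have h2 : 1 / γ ^ 2 + s = D / γ ^ 2 := by field_simp [hD]; ring
    rw [h2]
    field_simp
    ring
  · intro E r hcon
    have key : ∀ i, γ ^ 2 * res i ^ 2 ≤ D * ((∑ j, E i j ^ 2) + r i ^ 2) := by
      intro i
      have hu : γ * res i = r i - γ * ∑ j, E i j * x j := by
        have := hcon i
        have hb : b i = (∑ j, A i j * x j) - res i := by simp [res]
        rw [hb] at this
        rw [Finset.sum_congr rfl (fun j _ => add_mul (A i j) (E i j) (x j)),
          Finset.sum_add_distrib] at this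
        linarith [this]
      set u : ℝ := ∑ j, E i j * x j with hudef
      set t : ℝ := ∑ j, E i j ^ 2 with htdef
      have ht0 : 0 ≤ t := Finset.sum_nonneg fun j _ => sq_nonneg _
      have hcs : u ^ 2 ≤ t * s := by
        have := Finset.sum_mul_sq_le_sq_mul_sq Finset.univ (fun j => E i j) x
        simpa [htdef, hs] using this
      have : γ ^ 2 * res i ^ 2 = (r i - γ * u) ^ 2 := by
        rw [← hu]; ring
      rw [this]
      have hb0 : 0 ≤ t + γ ^ 2 * s * r i ^ 2 := by positivity
      have habs : (2 * γ * u * r i) ^ 2 ≤ (t + γ ^ 2 * s * r i ^ 2) ^ 2 := by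
        nlinarith [sq_nonneg (t - γ ^ 2 * s * r i ^ 2),
          mul_le_mul_of_nonneg_left hcs (by positivity : (0:ℝ) ≤ 4 * γ ^ 2 * r i ^ 2)]
      have h3 := abs_le_of_sq_le_sq' habs hb0
      have h4 : -(t + γ ^ 2 * s * r i ^ 2) ≤ 2 * γ * u * r i := h3.1
      nlinarith [mul_le_mul_of_nonneg_left hcs (le_of_lt hγ2)]
    have hsum : γ ^ 2 * R ≤ D * ((∑ i, ∑ j, E i j ^ 2) + ∑ i, r i ^ 2) := by
      have := Finset.sum_le_sum fun i (_ : i ∈ Finset.univ) => key i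
      rw [← Finset.mul_sum, ← Finset.mul_sum, Finset.sum_add_distrib] at this
      linarith
    have h2 : 1 / γ ^ 2 + s = D / γ ^ 2 := by field_simp [hD]; ring
    have hT0 : (0:ℝ) ≤ (∑ i, ∑ j, E i j ^ 2) + ∑ i, r i ^ 2 := by positivity
    rw [h2, div_div_eq_mul_div, div_le_iff₀ hD0]
    nlinarith [hsum, hT0]
end

section
/- Let $s, y \in \mathbb{R}^n$ with $s^Ty > 0$. For $\gamma > 0$ define $\alpha^{BB}(\gamma) = \frac{\|s\|^2 - \|y\|^2/\gamma^2 + \sqrt{(\|s\|^2 - \|y\|^2/\gamma^2)^2 + 4(s^Ty)^2/\gamma^2}}{2 s^T y}$ and $\alpha^{BB'}(\gamma) = \frac{2 s^T y}{\|y\|^2 - \|s\|^2/\gamma^2 + \sqrt{(\|s\|^2/\gamma^2 - \|y\|^2)^2 + 4(s^Ty)^2/\gamma^2}}$. Then $\alpha^{BB}(1) = \alpha^{BB'}(1)$, and consequently $\alpha^{BB}(1) = \min_{\gamma > 0} \max\{\alpha^{BB}(\gamma), \alpha^{BB'}(\gamma)\}$ (using that $\alpha^{BB}$ is nondecreasing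 and $\alpha^{BB'}$ is nonincreasing in $\gamma$). -/
private lemma pos_aux (a b : ℝ) (hb : 0 < b) : 0 < a + Real.sqrt (a ^ 2 + b) := by
  have h : |a| < Real.sqrt (a ^ 2 + b) := by
    rw [← Real.sqrt_sq_eq_abs]
    exact Real.sqrt_lt_sqrt (sq_nonneg a) (by linarith)
  have := neg_abs_le a
  linarith

set_option maxHeartbeats 1000000 in
private lemma mono_aux (S Y c γ : ℝ) (hc : 0 < c) (hY : 0 < Y) (hCS : c ^ 2 ≤ S * Y)
    (hγ : 0 < γ) :
    (1 ≤ γ → (S - Y + Real.sqrt ((S - Y) ^ 2 + 4 * c ^ 2)) / (2 * c) ≤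
      (S - Y / γ ^ 2 + Real.sqrt ((S - Y / γ ^ 2) ^ 2 + 4 * c ^ 2 / γ ^ 2)) / (2 * c)) ∧
    (γ ≤ 1 → (S - Y / γ ^ 2 + Real.sqrt ((S - Y / γ ^ 2) ^ 2 + 4 * c ^ 2 / γ ^ 2)) / (2 * c) ≤
      (S - Y + Real.sqrt ((S - Y) ^ 2 + 4 * c ^ 2)) / (2 * c)) := by
  have hγ2 : (0:ℝ) < γ ^ 2 := by positivity
  have h2c : (0:ℝ) < 2 * c := by linarith
  set R : ℝ := Real.sqrt ((S - Y) ^ 2 + 4 * c ^ 2) with hRdef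
  have hRnn : 0 ≤ R := Real.sqrt_nonneg _
  have hR2 : R ^ 2 = (S - Y) ^ 2 + 4 * c ^ 2 := Real.sq_sqrt (by positivity)
  clear_value R
  set r : ℝ := (S - Y + R) / (2 * c) with hrdef
  clear_value r
  have hrq : c * r ^ 2 = (S - Y) * r + c := by
    rw [hrdef]; field_simp; nlinarith [hR2]
  have hrY : c ≤ r * Y := by
    rw [hrdef]
    rw [div_mul_eq_mul_div, le_div_iff₀ h2c]
    nlinarith [hR2, mul_nonneg hY.le hRnn, sq_nonneg (Y * R - (2 * c ^ 2 - Y * (S - Y)))]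
  have h2cr : 2 * c * r = S - Y + R := by rw [hrdef]; field_simp
  set A : ℝ := S - Y / γ ^ 2 with hAdef
  set B : ℝ := 4 * c ^ 2 / γ ^ 2 with hBdef
  have hB : 0 < B := by positivity
  set Q : ℝ := Real.sqrt (A ^ 2 + B) with hQdef
  have hQnn : 0 ≤ Q := Real.sqrt_nonneg _
  have hQ2 : Q ^ 2 = A ^ 2 + B := Real.sq_sqrt (by positivity)
  clear_value Q
  have expand : A ^ 2 + B - (2 * c * r - A) ^ 2 =
      4 * c * ((r * Y - c) * (γ ^ 2 - 1)) / γ ^ 2 := by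
    rw [hAdef, hBdef]
    have hne : γ ^ 2 ≠ 0 := ne_of_gt hγ2
    field_simp
    linear_combination (-4 * c * γ ^ 4) * hrq
  clear_value A B
  constructor
  · intro h1
    have hγ21 : 1 ≤ γ ^ 2 := by nlinarith
    have hnn : 0 ≤ A ^ 2 + B - (2 * c * r - A) ^ 2 := by
      rw [expand]
      apply div_nonneg _ hγ2.le
      have h1' : 0 ≤ (r * Y - c) * (γ ^ 2 - 1) :=
        mul_nonneg (by linarith) (by linarith)
      nlinarith
    have hkey : 2 * c * r - A ≤ Q := by
      have h' := Real.sqrt_le_sqrt (show (2 * c * r - A) ^ 2 ≤ A ^ 2 + B by linarith)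
      rw [Real.sqrt_sq_eq_abs] at h'
      calc 2 * c * r - A ≤ |2 * c * r - A| := le_abs_self _
        _ ≤ Q := by rw [hQdef]; exact h'
    rw [hrdef, div_le_div_iff_of_pos_right h2c]
    linarith [hkey, h2cr]
  · intro h1
    have hγ21 : γ ^ 2 ≤ 1 := by nlinarith
    have hnp : A ^ 2 + B - (2 * c * r - A) ^ 2 ≤ 0 := by
      rw [expand]
      apply div_nonpos_of_nonpos_of_nonneg _ hγ2.le
      have h1' : (r * Y - c) * (γ ^ 2 - 1) ≤ 0 :=
        mul_nonpos_of_nonneg_of_nonpos (by linarith) (by linarith)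
      exact mul_nonpos_of_nonneg_of_nonpos (by linarith) h1'
    have hYle : Y ≤ Y / γ ^ 2 := by
      rw [le_div_iff₀ hγ2]; nlinarith
    have hApos : 0 ≤ 2 * c * r - A := by
      rw [h2cr, hAdef]; linarith [hYle, hRnn]
    have hkey : Q ≤ 2 * c * r - A := by
      rw [hQdef]
      calc Real.sqrt (A ^ 2 + B) ≤ Real.sqrt ((2 * c * r - A) ^ 2) :=
            Real.sqrt_le_sqrt (by linarith [hnp])
        _ = 2 * c * r - A := by rw [Real.sqrt_sq hApos]
    rw [hrdef, div_le_div_iff_of_pos_right h2c]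
    linarith [hkey, h2cr]

theorem stmt_15 (n : ℕ) (s y : Fin n → ℝ) (hsy : 0 < ∑ i, s i * y i) :
    let c : ℝ := ∑ i, s i * y i
    let αBB : ℝ → ℝ := fun γ => ((∑ i, s i ^ 2) - (∑ i, y i ^ 2) / γ ^ 2 +
      Real.sqrt (((∑ i, s i ^ 2) - (∑ i, y i ^ 2) / γ ^ 2) ^ 2 + 4 * c ^ 2 / γ ^ 2)) / (2 * c)
    let αBB' : ℝ → ℝ := fun γ => (2 * c) /
      ((∑ i, y i ^ 2) - (∑ i, s i ^ 2) / γ ^ 2 +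
        Real.sqrt (((∑ i, s i ^ 2) / γ ^ 2 - (∑ i, y i ^ 2)) ^ 2 + 4 * c ^ 2 / γ ^ 2))
    αBB 1 = αBB' 1 ∧
    IsLeast {v : ℝ | ∃ γ : ℝ, 0 < γ ∧ v = max (αBB γ) (αBB' γ)} (αBB 1) := by
  intro c αBB αBB'
  set S : ℝ := ∑ i, s i ^ 2 with hSdef
  set Y : ℝ := ∑ i, y i ^ 2 with hYdef
  have hc : 0 < c := hsy
  have hSnn : 0 ≤ S := Finset.sum_nonneg fun i _ => sq_nonneg _
  have hYnn : 0 ≤ Y := Finset.sum_nonneg fun i _ => sq_nonneg _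
  have hCS : c ^ 2 ≤ S * Y := Finset.sum_mul_sq_le_sq_mul_sq _ _ _
  have hY : 0 < Y := by nlinarith
  have hS : 0 < S := by nlinarith
  have h2c : (0:ℝ) < 2 * c := by linarith
  have hBBdef : ∀ γ : ℝ, αBB γ =
      (S - Y / γ ^ 2 + Real.sqrt ((S - Y / γ ^ 2) ^ 2 + 4 * c ^ 2 / γ ^ 2)) / (2 * c) :=
    fun γ => rfl
  have hBB'def : ∀ γ : ℝ, αBB' γ =
      (2 * c) / (Y - S / γ ^ 2 + Real.sqrt ((Y - S / γ ^ 2) ^ 2 + 4 * c ^ 2 / γ ^ 2)) := by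
    intro γ
    show (2 * c) / (Y - S / γ ^ 2 + Real.sqrt ((S / γ ^ 2 - Y) ^ 2 + 4 * c ^ 2 / γ ^ 2)) = _
    rw [show (S / γ ^ 2 - Y) ^ 2 = (Y - S / γ ^ 2) ^ 2 from by ring]
  have e1 : αBB 1 = (S - Y + Real.sqrt ((S - Y) ^ 2 + 4 * c ^ 2)) / (2 * c) := by
    rw [hBBdef 1]; norm_num
  have e2 : αBB' 1 = (2 * c) / (Y - S + Real.sqrt ((S - Y) ^ 2 + 4 * c ^ 2)) := by
    rw [hBB'def 1]; norm_num
    rw [show (Y - S) ^ 2 = (S - Y) ^ 2 from by ring]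
  set R : ℝ := Real.sqrt ((S - Y) ^ 2 + 4 * c ^ 2) with hRdef
  have hRnn : 0 ≤ R := Real.sqrt_nonneg _
  have hR2 : R ^ 2 = (S - Y) ^ 2 + 4 * c ^ 2 := Real.sq_sqrt (by positivity)
  have hYSR : 0 < Y - S + R := by nlinarith
  have heq : αBB 1 = αBB' 1 := by
    rw [e1, e2, div_eq_div_iff (ne_of_gt h2c) (ne_of_gt hYSR)]
    linear_combination hR2
  refine ⟨heq, ⟨1, one_pos, by rw [← heq, max_self]⟩, ?_⟩
  rintro v ⟨γ, hγ, rfl⟩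
  rcases le_total 1 γ with h | h
  · refine le_trans ?_ (le_max_left _ _)
    have := (mono_aux S Y c γ hc hY hCS hγ).1 h
    rw [e1, hBBdef γ]
    exact this
  · refine le_trans ?_ (le_max_right _ _)
    have hmono := (mono_aux Y S c γ hc hS (by rw [mul_comm]; exact hCS) hγ).2 h
    rw [show (Y - S) ^ 2 = (S - Y) ^ 2 from by ring, ← hRdef] at hmono
    have hD : Y - S / γ ^ 2 + Real.sqrt ((Y - S / γ ^ 2) ^ 2 + 4 * c ^ 2 / γ ^ 2) ≤
        Y - S + R := by
      have := mul_le_mul_of_nonneg_right hmono h2c.le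
      rw [div_mul_cancel₀ _ (ne_of_gt h2c), div_mul_cancel₀ _ (ne_of_gt h2c)] at this
      exact this
    have hDpos : 0 < Y - S / γ ^ 2 + Real.sqrt ((Y - S / γ ^ 2) ^ 2 + 4 * c ^ 2 / γ ^ 2) :=
      pos_aux _ _ (by positivity)
    rw [heq, e2, hBB'def γ]
    exact div_le_div_of_nonneg_left h2c.le hDpos hD
end

section
/- Let $a, b, c \in \mathbb{R}$ with $b > 0$, $c > 0$, and $c^2 \le ab$. For $t > 0$ define $\phi(t) = \frac{a - bt + \sqrt{(a-bt)^2 + 4c^2 t}}{2c}$. Then $\frac{c}{b} \le \phi(t) \le \frac{a}{c}$ for all $t > 0$. -/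
/-!
The quantity bounded is the positive root `φ` of `p(x) = c x² - (a - b t) x - c t`, which opens
upwards. At `x = c / b` one finds `p(x) = c (c² - a b) / b² ≤ 0`, so `c / b` lies between the roots
and hence below `φ`. At `x = a / c` one finds `p(x) = t (a b - c²) / c ≥ 0`, and `a / c` lies to the
right of the vertex `(a - b t) / (2 c)`, so `φ ≤ a / c`.
-/

namespace Real

theorem le_quadratic_root_of_nonpos {α β γ x : ℝ} (hα : 0 < α)
    (hx : α * x ^ 2 - β * x - γ ≤ 0) :
    x ≤ (β + √(β ^ 2 + 4 * α * γ)) / (2 * α) := by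
  have hsqrt : 2 * α * x - β ≤ √(β ^ 2 + 4 * α * γ) :=
    le_sqrt_of_sq_le (by nlinarith)
  rw [le_div_iff₀ (by positivity)]
  linarith

theorem quadratic_root_le_of_nonneg {α β γ x : ℝ} (hα : 0 < α) (hvertex : β ≤ 2 * α * x)
    (hx : 0 ≤ α * x ^ 2 - β * x - γ) :
    (β + √(β ^ 2 + 4 * α * γ)) / (2 * α) ≤ x := by
  have hsqrt : √(β ^ 2 + 4 * α * γ) ≤ 2 * α * x - β :=
    (sqrt_le_left (by linarith)).mpr (by nlinarith)
  rw [div_le_iff₀ (by positivity)]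
  linarith

end Real

theorem stmt_17 (a b c : ℝ) (hb : 0 < b) (hc : 0 < c) (hcab : c ^ 2 ≤ a * b)
    (t : ℝ) (ht : 0 < t) :
    c / b ≤ (a - b * t + Real.sqrt ((a - b * t) ^ 2 + 4 * c ^ 2 * t)) / (2 * c) ∧
    (a - b * t + Real.sqrt ((a - b * t) ^ 2 + 4 * c ^ 2 * t)) / (2 * c) ≤ a / c := by
  have ha : 0 < a := pos_of_mul_pos_left ((pow_pos hc 2).trans_le hcab) hb.le
  have hdisc : (a - b * t) ^ 2 + 4 * c ^ 2 * t = (a - b * t) ^ 2 + 4 * c * (c * t) := by ring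
  have hlower : c * (c / b) ^ 2 - (a - b * t) * (c / b) - c * t = c * (c ^ 2 - a * b) / b ^ 2 := by
    field_simp
    ring
  have hupper : c * (a / c) ^ 2 - (a - b * t) * (a / c) - c * t = t * (a * b - c ^ 2) / c := by
    field_simp
    ring
  rw [hdisc]
  constructor
  · apply Real.le_quadratic_root_of_nonpos hc
    rw [hlower]
    exact div_nonpos_of_nonpos_of_nonneg (mul_nonpos_of_nonneg_of_nonpos hc.le (by linarith))
      (by positivity)
  · apply Real.quadratic_root_le_of_nonneg hc
    · rw [mul_assoc, mul_div_cancel₀ _ hc.ne']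
      linarith [mul_pos hb ht]
    · rw [hupper]
      exact div_nonneg (mul_nonneg ht.le (by linarith)) hc.le
end
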